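/- Let M be a commutative monoid and F a Grothendieck topology on M such that every ideal in F contains a finitely generated ideal belonging to F. Then for any ideal 𝔠 ∉ F, there exists a prime ideal 𝔭 with 𝔠 ⊆ 𝔭 and 𝔭 ∉ F. -/

import Mathlib

/-!
Zorn's lemma gives an ideal `𝔭 ⊇ 𝔠` maximal among the ideals outside `F`: a chain of such ideals
has its union outside `F`, because an ideal of `F` contained in the union contains a finitely
generated one of `F`, whose generators already lie in one member of the chain. If `a * b ∈ 𝔭`
with `a, b ∉ 𝔭`, maximality puts `𝔭 ∪ aM` and `𝔭 ∪ bM` in `F`; the second lies in `(𝔭 : a)`,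
so `(𝔭 : a n) = ((𝔭 : a) : n) ∈ F` for all `n`, and the gluing axiom over `𝔭 ∪ aM` puts `𝔭`
in `F`.
-/

def IsRightIdeal {M : Type*} [Monoid M] (I : Set M) : Prop :=
  ∀ m ∈ I, ∀ x : M, m * x ∈ I

def resid {M : Type*} [Monoid M] (I : Set M) (a : M) : Set M := {x | a * x ∈ I}


def IsGTop {M : Type*} [Monoid M] (F : Set (Set M)) : Prop :=
  (∀ I ∈ F, IsRightIdeal I) ∧ Set.univ ∈ F ∧
  (∀ I ∈ F, ∀ m : M, resid I m ∈ F) ∧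
  (∀ I : Set M, IsRightIdeal I → ∀ J ∈ F, (∀ m ∈ J, resid I m ∈ F) → I ∈ F)


def IsPrimeIdeal {M : Type*} [CommMonoid M] (I : Set M) : Prop :=
  IsRightIdeal I ∧ I ≠ Set.univ ∧ ∀ a b : M, a * b ∈ I → a ∈ I ∨ b ∈ I

open Set

section Monoid

variable {M : Type*} [Monoid M] {F : Set (Set M)} {I : Set M}

def IsFinitary (F : Set (Set M)) : Prop :=
  ∀ b ∈ F, ∃ T : Finset M, (↑T : Set M) ⊆ b ∧ {y : M | ∃ t ∈ T, ∃ n : M, y = t * n} ∈ F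

theorem resid_resid (I : Set M) (a b : M) : resid (resid I a) b = resid I (a * b) := by
  ext x
  simp [resid, mul_assoc]

theorem IsRightIdeal.resid_eq_univ (hI : IsRightIdeal I) {m : M} (hm : m ∈ I) :
    resid I m = univ :=
  eq_univ_of_forall (hI m hm)

theorem isRightIdeal_sUnion {S : Set (Set M)} (hS : ∀ I ∈ S, IsRightIdeal I) :
    IsRightIdeal (⋃₀ S) := by
  rintro m ⟨I, hI, hmI⟩ x
  exact ⟨I, hI, hS I hI m hmI x⟩

theorem isRightIdeal_resid (hI : IsRightIdeal I) (a : M) : IsRightIdeal (resid I a) := by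
  intro m hm x
  show a * (m * x) ∈ I
  exact mul_assoc a m x ▸ hI _ hm x

theorem IsRightIdeal.union_range_mul (hI : IsRightIdeal I) (a : M) :
    IsRightIdeal (I ∪ range (a * ·)) := by
  rintro m (hm | ⟨n, rfl⟩) x
  · exact Or.inl (hI m hm x)
  · exact Or.inr ⟨n * x, (mul_assoc a n x).symm⟩

namespace IsGTop

variable (hF : IsGTop F)
include hF

theorem univ_mem : univ ∈ F := hF.2.1

theorem resid_mem {I : Set M} (hI : I ∈ F) (m : M) : resid I m ∈ F := hF.2.2.1 I hI m

theorem mem_of_forall_resid_mem {I J : Set M} (hI : IsRightIdeal I) (hJ : J ∈ F)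
    (h : ∀ m ∈ J, resid I m ∈ F) : I ∈ F :=
  hF.2.2.2 I hI J hJ h

theorem mem_of_superset {I J : Set M} (hI : I ∈ F) (hJ : IsRightIdeal J) (hIJ : I ⊆ J) :
    J ∈ F :=
  hF.mem_of_forall_resid_mem hJ hI fun _ hm => (hJ.resid_eq_univ (hIJ hm)).symm ▸ hF.univ_mem

theorem mem_of_union_range_mem_of_resid_mem (hI : IsRightIdeal I) {a : M}
    (ha : I ∪ range (a * ·) ∈ F) (hIa : resid I a ∈ F) : I ∈ F := by
  refine hF.mem_of_forall_resid_mem hI ha ?_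
  rintro m (hm | ⟨n, rfl⟩)
  · exact (hI.resid_eq_univ hm).symm ▸ hF.univ_mem
  · exact resid_resid I a n ▸ hF.resid_mem hIa n

theorem sUnion_notMem_of_isChain (hfin : IsFinitary F) {C : Set (Set M)}
    (hC : ∀ I ∈ C, IsRightIdeal I ∧ I ∉ F) (hchain : IsChain (· ⊆ ·) C) (hne : C.Nonempty) :
    ⋃₀ C ∉ F := by
  intro hU
  obtain ⟨T, hTU, hTF⟩ := hfin _ hU
  obtain ⟨I, hIC, hTI⟩ :=
    hchain.directedOn.exists_mem_subset_of_finite_of_subset_sUnion hne T.finite_toSet hTU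
  refine (hC I hIC).2 (hF.mem_of_superset hTF (hC I hIC).1 ?_)
  rintro y ⟨t, ht, n, rfl⟩
  exact (hC I hIC).1 t (hTI ht) n

theorem exists_maximal_notMem (hfin : IsFinitary F) {c : Set M} (hc : IsRightIdeal c)
    (hcF : c ∉ F) : ∃ p, c ⊆ p ∧ Maximal (fun I => IsRightIdeal I ∧ c ⊆ I ∧ I ∉ F) p := by
  refine zorn_subset_nonempty _ (fun C hCS hchain hne => ?_) c ⟨hc, subset_rfl, hcF⟩
  refine ⟨⋃₀ C, ⟨?_, ?_, ?_⟩, fun I hI => subset_sUnion_of_mem hI⟩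
  · exact isRightIdeal_sUnion fun I hI => (hCS hI).1
  · obtain ⟨I, hI⟩ := hne
    exact (hCS hI).2.1.trans (subset_sUnion_of_mem hI)
  · exact hF.sUnion_notMem_of_isChain hfin (fun I hI => ⟨(hCS hI).1, (hCS hI).2.2⟩) hchain hne

end IsGTop

end Monoid

section CommMonoid

variable {M : Type*} [CommMonoid M] {F : Set (Set M)} {p : Set M}

theorem IsRightIdeal.union_range_mul_subset_resid (hp : IsRightIdeal p) {a b : M}
    (hab : a * b ∈ p) : p ∪ range (b * ·) ⊆ resid p a := by
  rintro y (hy | ⟨n, rfl⟩)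
  · show a * y ∈ p
    exact mul_comm y a ▸ hp y hy a
  · show a * (b * n) ∈ p
    exact (mul_assoc a b n).symm ▸ hp _ hab n

theorem IsGTop.isPrimeIdeal_of_union_range_mul_mem (hF : IsGTop F) (hp : IsRightIdeal p)
    (hpF : p ∉ F) (hmax : ∀ x ∉ p, p ∪ range (x * ·) ∈ F) : IsPrimeIdeal p := by
  refine ⟨hp, fun h => hpF (h ▸ hF.univ_mem), fun a b hab => ?_⟩
  by_contra! ⟨ha, hb⟩
  have hpa : resid p a ∈ F :=
    hF.mem_of_superset (hmax b hb) (isRightIdeal_resid hp a) (hp.union_range_mul_subset_resid hab)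
  exact hpF (hF.mem_of_union_range_mem_of_resid_mem hp (hmax a ha) hpa)

end CommMonoid

theorem exists_prime_not_in_topology {M : Type*} [CommMonoid M]
    (F : Set (Set M)) (hF : IsGTop F)
    (hfin : ∀ b ∈ F, ∃ T : Finset M, (↑T : Set M) ⊆ b ∧
      {y : M | ∃ t ∈ T, ∃ n : M, y = t * n} ∈ F)
    (c : Set M) (hc : IsRightIdeal c) (hcF : c ∉ F) :
    ∃ p : Set M, IsPrimeIdeal p ∧ c ⊆ p ∧ p ∉ F := by
  obtain ⟨p, hcp, ⟨hp, -, hpF⟩, hpmax⟩ := hF.exists_maximal_notMem hfin hc hcF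
  refine ⟨p, hF.isPrimeIdeal_of_union_range_mul_mem hp hpF fun x hx => ?_, hcp, hpF⟩
  by_contra hxF
  have hle := hpmax ⟨hp.union_range_mul x, hcp.trans subset_union_left, hxF⟩ subset_union_left
  exact hx (hle (Or.inr ⟨1, mul_one x⟩))
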